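/- Atomic completeness: for any contextual bunch of atoms S(·), atom p, bunch of atoms P, and base B: P ⊩_B^{S(·)} p if and only if S(P) ⊢_B p. -/
import Mathlib


/-- Bunches over a set `X`: trees with additive (`semi`, unit `aunit`) and
multiplicative (`comma`, unit `munit`) context-formers. -/
inductive Bunch (X : Type) : Type
  | leaf (x : X)
  | aunit
  | munit
  | semi (Γ Δ : Bunch X)
  | comma (Γ Δ : Bunch X)

/-- Bunches with a single hole (contextual bunches). -/
inductive BunchCtx (X : Type) : Type
  | hole
  | semiL (c : BunchCtx X) (Δ : Bunch X)
  | semiR (Γ : Bunch X) (c : BunchCtx X)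
  | commaL (c : BunchCtx X) (Δ : Bunch X)
  | commaR (Γ : Bunch X) (c : BunchCtx X)

/-- Plugging a bunch into the hole of a contextual bunch. -/
def BunchCtx.fill {X : Type} : BunchCtx X → Bunch X → Bunch X
  | .hole, Δ => Δ
  | .semiL c Θ, Δ => .semi (c.fill Δ) Θ
  | .semiR Γ c, Δ => .semi Γ (c.fill Δ)
  | .commaL c Θ, Δ => .comma (c.fill Δ) Θ
  | .commaR Γ c, Δ => .comma Γ (c.fill Δ)

/-- Composition of contextual bunches: `(c.comp d).fill Δ = c.fill (d.fill Δ)`. -/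
def BunchCtx.comp {X : Type} : BunchCtx X → BunchCtx X → BunchCtx X
  | .hole, d => d
  | .semiL c Θ, d => .semiL (c.comp d) Θ
  | .semiR Γ c, d => .semiR Γ (c.comp d)
  | .commaL c Θ, d => .commaL (c.comp d) Θ
  | .commaR Γ c, d => .commaR Γ (c.comp d)

/-- Coherent equivalence: least equivalence relation containing the
commutative-monoid equations for each context-former with its unit, closed
under congruence (substitution of equivalent sub-bunches). -/
inductive CohEq {X : Type} : Bunch X → Bunch X → Prop
  | refl (Γ) : CohEq Γ Γ
  | symm {Γ Δ} : CohEq Γ Δ → CohEq Δ Γ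
  | trans {Γ Δ Θ} : CohEq Γ Δ → CohEq Δ Θ → CohEq Γ Θ
  | semiAssoc (Γ₁ Γ₂ Γ₃) : CohEq (.semi (.semi Γ₁ Γ₂) Γ₃) (.semi Γ₁ (.semi Γ₂ Γ₃))
  | semiComm (Γ₁ Γ₂) : CohEq (.semi Γ₁ Γ₂) (.semi Γ₂ Γ₁)
  | semiUnit (Γ) : CohEq (.semi Γ .aunit) Γ
  | commaAssoc (Γ₁ Γ₂ Γ₃) : CohEq (.comma (.comma Γ₁ Γ₂) Γ₃) (.comma Γ₁ (.comma Γ₂ Γ₃))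
  | commaComm (Γ₁ Γ₂) : CohEq (.comma Γ₁ Γ₂) (.comma Γ₂ Γ₁)
  | commaUnit (Γ) : CohEq (.comma Γ .munit) Γ
  | congr (c : BunchCtx X) {Δ Δ'} : CohEq Δ Δ' → CohEq (c.fill Δ) (c.fill Δ')

/-- Bunch-extension `Γ ⪰ Γ'`: least transitive relation such that `Γ ⪰ Γ'`
whenever `Γ` is coherently equivalent to `Γ'` with one occurrence of a
sub-bunch `Δ` replaced by `Δ ⨟ Δ'`. -/
inductive BunchExt {X : Type} : Bunch X → Bunch X → Prop
  | step (c : BunchCtx X) (Δ Δ' : Bunch X) {Γ : Bunch X} :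
      CohEq Γ (c.fill (.semi Δ Δ')) → BunchExt Γ (c.fill Δ)
  | trans {Γ Δ Θ} : BunchExt Γ Δ → BunchExt Δ Θ → BunchExt Γ Θ

/-- An atomic rule: a finite list of premiss sequents of atoms and a
conclusion sequent of atoms. -/
structure AtomicRule (A : Type) : Type where
  prems : List (Bunch A × A)
  concl : Bunch A × A

/-- A base: a set of atomic rules. -/
abbrev Base (A : Type) := Set (AtomicRule A)

/-- Derivability in a base. -/
inductive Deriv {A : Type} (B : Base A) : Bunch A → A → Prop
  | taut (p : A) : Deriv B (.leaf p) p
  | rule (r : AtomicRule A) (hr : r ∈ B)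
      (hp : ∀ pr ∈ r.prems, Deriv B pr.1 pr.2) : Deriv B r.concl.1 r.concl.2
  | weak (c : BunchCtx A) (Q Q' : Bunch A) {p : A} :
      Deriv B (c.fill Q) p → Deriv B (c.fill (.semi Q Q')) p
  | cont (c : BunchCtx A) (Q : Bunch A) {p : A} :
      Deriv B (c.fill (.semi Q Q)) p → Deriv B (c.fill Q) p
  | exch (c : BunchCtx A) {Q Q' : Bunch A} {p : A} :
      Deriv B (c.fill Q) p → CohEq Q Q' → Deriv B (c.fill Q') p
  | cut (c : BunchCtx A) {T : Bunch A} {q p : A} :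
      Deriv B T q → Deriv B (c.fill (.leaf q)) p → Deriv B (c.fill T) p

/-- Formulae of BI. -/
inductive Form (A : Type) : Type
  | atom (p : A)
  | top
  | bot
  | mtop
  | and (φ ψ : Form A)
  | or (φ ψ : Form A)
  | imp (φ ψ : Form A)
  | star (φ ψ : Form A)
  | wand (φ ψ : Form A)

/-- Support of a formula in a base relative to an atomic resource bunch. -/
def suppF {A : Type} : Form A → Base A → Bunch A → Prop
  | .atom p, B, S => Deriv B S p
  | .and φ ψ, B, S => ∀ (X : Base A), B ⊆ X → ∀ (U : BunchCtx A) (p : A),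
      (∀ (Y : Base A), X ⊆ Y → ∀ (V : Bunch A),
        (∃ Q₁ Q₂, BunchExt V Q₁ ∧ BunchExt V Q₂ ∧ suppF φ Y Q₁ ∧ suppF ψ Y Q₂) →
        Deriv Y (U.fill V) p) →
      Deriv X (U.fill S) p
  | .star φ ψ, B, S => ∀ (X : Base A), B ⊆ X → ∀ (U : BunchCtx A) (p : A),
      (∀ (Y : Base A), X ⊆ Y → ∀ (V : Bunch A),
        (∃ Q₁ Q₂, BunchExt V (.comma Q₁ Q₂) ∧ suppF φ Y Q₁ ∧ suppF ψ Y Q₂) →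
        Deriv Y (U.fill V) p) →
      Deriv X (U.fill S) p
  | .or φ ψ, B, S => ∀ (X : Base A), B ⊆ X → ∀ (U : BunchCtx A) (p : A),
      (∀ (Y : Base A), X ⊆ Y → ∀ (V : Bunch A), suppF φ Y V → Deriv Y (U.fill V) p) →
      (∀ (Y : Base A), X ⊆ Y → ∀ (V : Bunch A), suppF ψ Y V → Deriv Y (U.fill V) p) →
      Deriv X (U.fill S) p
  | .imp φ ψ, B, S => ∀ (X : Base A), B ⊆ X → ∀ (U : Bunch A),
      suppF φ X U → suppF ψ X (.semi S U)
  | .wand φ ψ, B, S => ∀ (X : Base A), B ⊆ X → ∀ (U : Bunch A),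
      suppF φ X U → suppF ψ X (.comma S U)
  | .bot, B, S => ∀ (U : BunchCtx A) (p : A), Deriv B (U.fill S) p
  | .top, B, S => ∀ (X : Base A), B ⊆ X → ∀ (U : BunchCtx A) (p : A),
      Deriv X (U.fill .aunit) p → Deriv X (U.fill S) p
  | .mtop, B, S => ∀ (X : Base A), B ⊆ X → ∀ (U : BunchCtx A) (p : A),
      Deriv X (U.fill .munit) p → Deriv X (U.fill S) p

/-- Support of a bunch of formulae. -/
def suppB {A : Type} : Bunch (Form A) → Base A → Bunch A → Prop
  | .leaf φ, B, S => suppF φ B S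
  | .aunit, _, _ => True
  | .munit, _, S => BunchExt S .munit
  | .semi Γ Δ, B, S =>
      ∃ Q₁ Q₂, BunchExt S Q₁ ∧ BunchExt S Q₂ ∧ suppB Γ B Q₁ ∧ suppB Δ B Q₂
  | .comma Γ Δ, B, S =>
      ∃ Q₁ Q₂, BunchExt S (.comma Q₁ Q₂) ∧ suppB Γ B Q₁ ∧ suppB Δ B Q₂

/-- The support judgement `Γ ⊩_B^{R(·)} φ` (clause (Inf)). -/
def SuppInf {A : Type} (B : Base A) (R : BunchCtx A) (Γ : Bunch (Form A))
    (φ : Form A) : Prop :=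
  ∀ (X : Base A), B ⊆ X → ∀ (U : Bunch A), suppB Γ X U → suppF φ X (R.fill U)

/-- Validity: support with the identity contextual bunch in every base. -/
def Valid {A : Type} (Γ : Bunch (Form A)) (φ : Form A) : Prop :=
  ∀ B : Base A, SuppInf B .hole Γ φ

/-- View a bunch of atoms as a bunch of atomic formulae. -/
def Bunch.atomize {A : Type} : Bunch A → Bunch (Form A)
  | .leaf p => .leaf (.atom p)
  | .aunit => .aunit
  | .munit => .munit
  | .semi Γ Δ => .semi Γ.atomize Δ.atomize
  | .comma Γ Δ => .comma Γ.atomize Δ.atomize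

theorem BunchCtx.comp_fill {X : Type} (c d : BunchCtx X) (Δ : Bunch X) :
    (c.comp d).fill Δ = c.fill (d.fill Δ) := by
  induction c <;> simp [BunchCtx.comp, BunchCtx.fill, *]

theorem BunchExt.refl {X : Type} (Γ : Bunch X) : BunchExt Γ Γ :=
  BunchExt.step .hole Γ .aunit (CohEq.symm (CohEq.semiUnit Γ))

theorem Deriv.mono {A : Type} {B X : Base A} (h : B ⊆ X) {Γ : Bunch A} {p : A}
    (d : Deriv B Γ p) : Deriv X Γ p := by
  induction d with
  | taut q => exact Deriv.taut q
  | rule r hr hp ih => exact Deriv.rule r (h hr) (fun pr hpr => ih pr hpr)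
  | weak c Q Q' _ ih => exact Deriv.weak c Q Q' ih
  | cont c Q _ ih => exact Deriv.cont c Q ih
  | exch c _ he ih => exact Deriv.exch c ih he
  | cut c _ _ ih1 ih2 => exact Deriv.cut c ih1 ih2

theorem Deriv.ofExt {A : Type} {X : Base A} {U V : Bunch A}
    (h : BunchExt U V) : ∀ (c : BunchCtx A) (q : A),
    Deriv X (c.fill V) q → Deriv X (c.fill U) q := by
  induction h with
  | step c' Δ Δ' he =>
    intro c q hd
    have hw := Deriv.weak (c.comp c') Δ Δ' (by rwa [BunchCtx.comp_fill])
    rw [BunchCtx.comp_fill] at hw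
    exact Deriv.exch c hw (CohEq.symm he)
  | trans _ _ ih1 ih2 => exact fun c q hd => ih1 c q (ih2 c q hd)

theorem suppB_self {A : Type} (P : Bunch A) (B : Base A) :
    suppB P.atomize B P := by
  induction P with
  | leaf q => exact Deriv.taut q
  | aunit => trivial
  | munit => exact BunchExt.refl _
  | semi Γ Δ ih1 ih2 =>
    refine ⟨Γ, Δ, ?_, ?_, ih1, ih2⟩
    · exact BunchExt.step .hole Γ Δ (CohEq.refl _)
    · exact BunchExt.step .hole Δ Γ (CohEq.semiComm Γ Δ)
  | comma Γ Δ ih1 ih2 => exact ⟨Γ, Δ, BunchExt.refl _, ih1, ih2⟩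

theorem suppB_subst {A : Type} {X : Base A} (P : Bunch A) {U : Bunch A}
    (h : suppB P.atomize X U) : ∀ (c : BunchCtx A) (q : A),
    Deriv X (c.fill P) q → Deriv X (c.fill U) q := by
  induction P generalizing U with
  | leaf r =>
    intro c q hd
    exact Deriv.cut c (h : Deriv X U r) hd
  | aunit =>
    intro c q hd
    have hw := Deriv.weak c .aunit U hd
    exact Deriv.exch c hw
      (CohEq.trans (CohEq.semiComm _ _) (CohEq.semiUnit U))
  | munit => exact fun c q hd => Deriv.ofExt h c q hd
  | semi Γ Δ ih1 ih2 =>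
    intro c q hd
    obtain ⟨Q₁, Q₂, e1, e2, s1, s2⟩ := h
    have h1 := ih1 s1 (c.comp (.semiL .hole Δ)) q
      (by rwa [BunchCtx.comp_fill])
    rw [BunchCtx.comp_fill] at h1
    have h2 := ih2 s2 (c.comp (.semiR Q₁ .hole)) q
      (by rwa [BunchCtx.comp_fill])
    rw [BunchCtx.comp_fill] at h2
    simp only [BunchCtx.fill] at h1 h2
    have h3 := Deriv.ofExt e1 (c.comp (.semiL .hole Q₂)) q
      (by rwa [BunchCtx.comp_fill])
    rw [BunchCtx.comp_fill] at h3
    have h4 := Deriv.ofExt e2 (c.comp (.semiR U .hole)) q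
      (by rwa [BunchCtx.comp_fill])
    rw [BunchCtx.comp_fill] at h4
    simp only [BunchCtx.fill] at h3 h4
    exact Deriv.cont c U h4
  | comma Γ Δ ih1 ih2 =>
    intro c q hd
    obtain ⟨Q₁, Q₂, e, s1, s2⟩ := h
    have h1 := ih1 s1 (c.comp (.commaL .hole Δ)) q
      (by rwa [BunchCtx.comp_fill])
    rw [BunchCtx.comp_fill] at h1
    have h2 := ih2 s2 (c.comp (.commaR Q₁ .hole)) q
      (by rwa [BunchCtx.comp_fill])
    rw [BunchCtx.comp_fill] at h2
    simp only [BunchCtx.fill] at h1 h2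
    exact Deriv.ofExt e c q h2

/-- atomic completeness: P ⊩_B^{S(·)} p iff S(P) ⊢_B p. -/
theorem atomic_completeness {A : Type} (S : BunchCtx A) (p : A) (P : Bunch A)
    (B : Base A) :
    SuppInf B S P.atomize (Form.atom p) ↔ Deriv B (S.fill P) p := by
  constructor
  · intro h
    exact h B (subset_refl B) P (suppB_self P B)
  · intro h X hBX U hU
    exact suppB_subst P hU S p (Deriv.mono hBX h)
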